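/- For every integer k ≥ 2, homotopy lifting fails for the canonical projection p : L_k^♯ → ℝ: there exist a continuous map H : [0,1] × [0,1] → ℝ whose bottom path s ↦ H(s,0) is a loop based at 1 (that is, H(0,0) = H(1,0) = 1), and a continuous lift γ̃ : [0,1] → L_k^♯ of the bottom path (p ∘ γ̃ = H(·,0)), such that no continuous map H̃ : [0,1] × [0,1] → L_k^♯ satisfies both p ∘ H̃ = H and H̃(s,0) = γ̃(s) for all s ∈ [0,1]. -/

import Mathlib

/-!
`H(s,t) = 2t + |4s - 2| - 1` vanishes on the bottom edge only at `s = 1/4` and `s = 3/4`, and inside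
the square along the tent `t = (1 - |4s - 2|)/2` joining them. Since `H(1/2, 0) ≠ 0`, the bottom
path lifts continuously by running on sheet `i` up to `s = 1/2` and on sheet `j ≠ i` afterwards, so
the lift passes through `o_i` at `1/4` and through `o_j` at `3/4`. A lift of `H` would map the
connected tent into the fibre `p⁻¹(0) = {o_1, …, o_k}`, which is discrete, so it would be
constant along the tent, contradicting `o_i ≠ o_j`.
-/

/-- The gluing relation on `Fin k × ℝ`: `(i,x) ∼ (j,y)` iff `x = y` and
(`x ≠ 0` or `i = j`), i.e. all non-zero points are glued and the origins stay apart. -/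
def lineSetoid (k : ℕ) : Setoid (Fin k × ℝ) where
  r p q := p.2 = q.2 ∧ (p.2 ≠ 0 ∨ p.1 = q.1)
  iseqv := by
    constructor
    · exact fun p => ⟨rfl, Or.inr rfl⟩
    · rintro p q ⟨h1, h2⟩
      refine ⟨h1.symm, ?_⟩
      rcases h2 with h | h
      · exact Or.inl (h1 ▸ h)
      · exact Or.inr h.symm
    · rintro p q r ⟨h1, h2⟩ ⟨h3, h4⟩
      refine ⟨h1.trans h3, ?_⟩
      rcases h2 with h | h
      · exact Or.inl h
      · rcases h4 with h' | h'
        · exact Or.inl (h1.symm ▸ h')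
        · exact Or.inr (h.trans h')

/-- The line with `k` (inseparable) origins `L_k^♯`, as a quotient of `Fin k × ℝ`
equipped with the quotient topology. -/
def LineK (k : ℕ) : Type := Quotient (lineSetoid k)

instance (k : ℕ) : TopologicalSpace (LineK k) :=
  inferInstanceAs (TopologicalSpace (Quotient (lineSetoid k)))

/-- `[x]_i`, the class of the point `x` on the `i`-th copy of `ℝ`. -/
def LineK.mk (k : ℕ) (i : Fin k) (x : ℝ) : LineK k := Quotient.mk (lineSetoid k) (i, x)

/-- The `i`-th origin `o_i = [0]_i`. -/
def LineK.origin (k : ℕ) (i : Fin k) : LineK k := LineK.mk k i 0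

/-- The canonical projection `p : L_k^♯ → ℝ`, `[x]_i ↦ x`. -/
def LineK.proj (k : ℕ) : LineK k → ℝ :=
  Quotient.lift (fun p => p.2) (fun _ _ h => h.1)


section

open unitInterval

namespace LineK

variable {k : ℕ}

lemma continuous_mk (i : Fin k) : Continuous (mk k i) :=
  continuous_quotient_mk'.comp (continuous_const.prodMk continuous_id)

lemma mk_eq_mk_of_ne_zero (i j : Fin k) {x : ℝ} (hx : x ≠ 0) : mk k i x = mk k j x :=
  Quotient.sound ⟨rfl, Or.inl hx⟩

lemma mk_eq_origin_iff (i j : Fin k) (x : ℝ) : mk k i x = origin k j ↔ x = 0 ∧ i = j := by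
  refine ⟨fun h => ?_, fun ⟨hx, hij⟩ => hx ▸ hij ▸ rfl⟩
  obtain ⟨hx, hij⟩ := Quotient.exact h
  exact ⟨hx, hij.resolve_left (not_not.mpr hx)⟩

lemma origin_injective : Function.Injective (origin k) :=
  fun i j h => ((mk_eq_origin_iff i j 0).mp h).2

lemma isOpen_insert_origin (i : Fin k) : IsOpen (insert (origin k i) {q | proj k q ≠ 0}) := by
  refine isOpen_coinduced.mpr ?_
  have hopen : IsOpen ({p : Fin k × ℝ | p.2 ≠ 0} ∪ Prod.fst ⁻¹' {i}) :=
    (isOpen_ne.preimage continuous_snd).union ((isOpen_discrete _).preimage continuous_fst)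
  convert hopen using 1
  ext ⟨j, x⟩
  change mk k j x = origin k i ∨ x ≠ 0 ↔ _
  rw [mk_eq_origin_iff]
  simp only [Set.mem_union, Set.mem_ofPred_eq, Set.mem_preimage, Set.mem_singleton_iff]
  tauto

lemma isDiscrete_proj_preimage_zero : IsDiscrete (proj k ⁻¹' {0}) := by
  refine isDiscrete_iff_forall_mem_exists_isOpen.mpr fun y hy => ?_
  induction y using Quotient.inductionOn with | h p => ?_
  obtain ⟨i, x⟩ := p
  obtain rfl : x = 0 := hy
  refine ⟨_, isOpen_insert_origin i, ?_⟩
  ext q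
  simp only [Set.mem_inter_iff, Set.mem_insert_iff, Set.mem_ofPred_eq, Set.mem_preimage,
    Set.mem_singleton_iff]
  constructor
  · rintro ⟨hq | hq, hq0⟩
    exacts [hq, absurd hq0 hq]
  · rintro rfl
    exact ⟨Or.inl rfl, rfl⟩

end LineK

noncomputable def tentHomotopy (p : I × I) : ℝ := 2 * (p.2 : ℝ) + |4 * (p.1 : ℝ) - 2| - 1

lemma continuous_tentHomotopy : Continuous tentHomotopy := by
  unfold tentHomotopy; fun_prop

noncomputable def tentPath (u : I) : I × I :=
  (⟨(1 + 2 * (u : ℝ)) / 4, by constructor <;> linarith [u.2.1, u.2.2]⟩,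
   ⟨(1 - |2 * (u : ℝ) - 1|) / 2, by
        constructor <;> cases abs_cases (2 * (u : ℝ) - 1) <;> linarith [u.2.1, u.2.2]⟩)

lemma continuous_tentPath : Continuous tentPath := by
  unfold tentPath
  apply Continuous.prodMk <;> apply Continuous.subtype_mk <;> fun_prop

lemma tentHomotopy_tentPath (u : I) : tentHomotopy (tentPath u) = 0 := by
  simp only [tentHomotopy, tentPath]
  rw [show 4 * ((1 + 2 * (u : ℝ)) / 4) - 2 = 2 * u - 1 by ring]
  ring

lemma tentPath_zero : tentPath 0 = (⟨1/4, by norm_num⟩, 0) := by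
  ext <;> norm_num [tentPath]

lemma tentPath_one : tentPath 1 = (⟨3/4, by norm_num⟩, 0) := by
  ext <;> norm_num [tentPath]

noncomputable def bottomLift (k : ℕ) (i j : Fin k) (s : I) : LineK k :=
  if (s : ℝ) ≤ 1/2 then LineK.mk k i (tentHomotopy (s, 0)) else LineK.mk k j (tentHomotopy (s, 0))

lemma continuous_bottomLift (k : ℕ) (i j : Fin k) : Continuous (bottomLift k i j) := by
  have hbottom : Continuous fun s : I => tentHomotopy (s, 0) :=
    continuous_tentHomotopy.comp (continuous_id.prodMk continuous_const)
  refine Continuous.if_le ((LineK.continuous_mk i).comp hbottom)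
    ((LineK.continuous_mk j).comp hbottom) continuous_subtype_val continuous_const ?_
  intro s hs
  apply LineK.mk_eq_mk_of_ne_zero
  norm_num [tentHomotopy, hs]

lemma proj_bottomLift (k : ℕ) (i j : Fin k) (s : I) :
    LineK.proj k (bottomLift k i j s) = tentHomotopy (s, 0) := by
  unfold bottomLift
  split_ifs <;> rfl

lemma bottomLift_quarter (k : ℕ) (i j : Fin k) :
    bottomLift k i j ⟨1/4, by norm_num⟩ = LineK.origin k i := by
  norm_num [bottomLift, tentHomotopy, LineK.origin]

lemma bottomLift_three_quarters (k : ℕ) (i j : Fin k) :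
    bottomLift k i j ⟨3/4, by norm_num⟩ = LineK.origin k j := by
  norm_num [bottomLift, tentHomotopy, LineK.origin]

lemma not_exists_lift_tentHomotopy (k : ℕ) {i j : Fin k} (hij : i ≠ j) :
    ¬ ∃ Ht : I × I → LineK k, Continuous Ht ∧
      (∀ st, LineK.proj k (Ht st) = tentHomotopy st) ∧ ∀ s, Ht (s, 0) = bottomLift k i j s := by
  rintro ⟨Ht, hcont, hproj, hbottom⟩
  have hconst : Ht (tentPath 0) = Ht (tentPath 1) :=
    isPreconnected_univ.constant_of_mapsTo LineK.isDiscrete_proj_preimage_zero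
      (hcont.comp continuous_tentPath).continuousOn
      (fun u _ => (hproj _).trans (tentHomotopy_tentPath u)) (Set.mem_univ _) (Set.mem_univ _)
  rw [tentPath_zero, tentPath_one, hbottom, hbottom, bottomLift_quarter,
    bottomLift_three_quarters] at hconst
  exact hij (LineK.origin_injective hconst)

end

/-- For every integer `k ≥ 2`, homotopy lifting fails for
`p : L_k^♯ → ℝ`: there are a continuous `H : [0,1] × [0,1] → ℝ` whose bottom
path `s ↦ H(s,0)` is a loop based at `1`, and a continuous lift `γ̃` of the
bottom path, such that no continuous `H̃ : [0,1] × [0,1] → L_k^♯` satisfies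
both `p ∘ H̃ = H` and `H̃(s,0) = γ̃(s)` for all `s`. -/
theorem stmt16 (k : ℕ) (hk : 2 ≤ k) :
    ∃ H : unitInterval × unitInterval → ℝ, Continuous H ∧
      H (0, 0) = 1 ∧ H (1, 0) = 1 ∧
      ∃ γt : unitInterval → LineK k, Continuous γt ∧
        (∀ s, LineK.proj k (γt s) = H (s, 0)) ∧
        ¬ ∃ Ht : unitInterval × unitInterval → LineK k, Continuous Ht ∧
            (∀ st, LineK.proj k (Ht st) = H st) ∧
            ∀ s, Ht (s, 0) = γt s := by
  let i : Fin k := ⟨0, by omega⟩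
  let j : Fin k := ⟨1, hk⟩
  have hij : i ≠ j := by simp [i, j, Fin.ext_iff]
  refine ⟨tentHomotopy, continuous_tentHomotopy, by norm_num [tentHomotopy],
    by norm_num [tentHomotopy], bottomLift k i j, continuous_bottomLift k i j,
    proj_bottomLift k i j, not_exists_lift_tentHomotopy k hij⟩
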